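/- arXiv:2001.01792 — 2 statements merged into one kernel-verified Lean document; each statement's English description precedes it below -/
import Mathlib

section
/- Let H be a normal subgroup of Homeo_c(𝔻,ω), let h ∈ H, and let 𝔻' be a closed topological disc contained in the interior of 𝔻 such that h(𝔻') ∩ 𝔻' = ∅. Then for all f, g ∈ Homeo_c(𝔻,ω) supported in the interior of 𝔻', the commutator [f,g] = f∘g∘f⁻¹∘g⁻¹ belongs to H. -/
open MeasureTheory Set Filter Topology

noncomputable section

/-- The closed unit disc `𝔻 = {p : |p| ≤ 1}` in the plane, with total
`discMeasure`-measure `1/2`. -/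
def Disc : Set (ℝ × ℝ) := {p | p.1 ^ 2 + p.2 ^ 2 ≤ 1}

/-- The open unit disc, i.e. the interior of `𝔻`. -/
def OpenDisc : Set (ℝ × ℝ) := {p | p.1 ^ 2 + p.2 ^ 2 < 1}

/-- The measure `μ = (1/(2π)) · (Lebesgue measure)` induced by the area form
`ω = (1/(2π)) dx ∧ dy`. -/
def discMeasure : Measure (ℝ × ℝ) := ENNReal.ofReal (1 / (2 * Real.pi)) • volume

/-- `Homeo_c(𝔻, ω)`: the group of area-preserving homeomorphisms of the disc that are the
identity on a neighborhood of the boundary.  Since such a homeomorphism extends uniquely (by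
the identity) to a homeomorphism of the plane which is the identity outside a compact subset
of the open disc, we realize `Homeo_c(𝔻, ω)` as the subgroup of `Equiv.Perm (ℝ × ℝ)`
(whose multiplication is composition, `(φ * ψ) p = φ (ψ p)`) consisting of the
`discMeasure`-preserving homeomorphisms of the plane equal to the identity outside a compact
subset of the open unit disc. -/
def HomeoDisc : Subgroup (Equiv.Perm (ℝ × ℝ)) where
  carrier := {φ : Equiv.Perm (ℝ × ℝ) | Continuous φ ∧ Continuous φ.symm ∧
      MeasurePreserving φ discMeasure discMeasure ∧
      ∃ K : Set (ℝ × ℝ), IsCompact K ∧ K ⊆ OpenDisc ∧ ∀ p ∉ K, φ p = p}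
  one_mem' := ⟨continuous_id, continuous_id, MeasurePreserving.id _, ∅, isCompact_empty,
    empty_subset _, fun _ _ => rfl⟩
  mul_mem' := by
    rintro a b ⟨ha1, ha2, ha3, Ka, hKa, hKaD, hKa'⟩ ⟨hb1, hb2, hb3, Kb, hKb, hKbD, hKb'⟩
    refine ⟨ha1.comp hb1, hb2.comp ha2, ha3.comp hb3, Ka ∪ Kb, hKa.union hKb,
      union_subset hKaD hKbD, fun p hp => ?_⟩
    have hpa : p ∉ Ka := fun h => hp (Or.inl h)
    have hpb : p ∉ Kb := fun h => hp (Or.inr h)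
    show a (b p) = p
    rw [hKb' p hpb, hKa' p hpa]
  inv_mem' := by
    rintro a ⟨ha1, ha2, ha3, K, hK, hKD, hK'⟩
    refine ⟨ha2, ha1, ?_, K, hK, hKD, fun p hp => ?_⟩
    · exact MeasurePreserving.symm
        (⟨a, ha1.measurable, ha2.measurable⟩ : (ℝ × ℝ) ≃ᵐ (ℝ × ℝ)) ha3
    · have h1 : a p = p := hK' p hp
      calc a⁻¹ p = a⁻¹ (a p) := by rw [h1]
        _ = p := a.symm_apply_apply p

/-- `φ` is supported in `S`: every non-fixed point of `φ` lies in `S`. -/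
def SupportedIn (φ : Equiv.Perm (ℝ × ℝ)) (S : Set (ℝ × ℝ)) : Prop :=
  ∀ p, φ p ≠ p → p ∈ S

/-! The conjugate `c = h f h⁻¹` is supported in `h(𝔻')`, which is disjoint from `𝔻'`, so `c`
commutes with `g`. Hence `⁅f, g⁆ = ⁅f c⁻¹, g⁆ = ⁅⁅f, h⁆, g⁆`, and `⁅f, h⁆ = (f h f⁻¹) h⁻¹` lies in
the normal subgroup `H`, so its commutator with `g` does too. -/

namespace SupportedIn

variable {φ ψ σ : Equiv.Perm (ℝ × ℝ)} {S T : Set (ℝ × ℝ)}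

theorem mono (hφ : SupportedIn φ S) (hST : S ⊆ T) : SupportedIn φ T :=
  fun p hp => hST (hφ p hp)

theorem conj (hφ : SupportedIn φ S) : SupportedIn (σ * φ * σ⁻¹) (σ '' S) := by
  intro p hp
  refine ⟨σ⁻¹ p, hφ _ fun hfix => hp ?_, σ.apply_symm_apply p⟩
  rw [Equiv.Perm.mul_apply, Equiv.Perm.mul_apply, hfix]
  exact σ.apply_symm_apply p

theorem commute_of_disjoint (hφ : SupportedIn φ S) (hψ : SupportedIn ψ T)
    (hST : Disjoint S T) : Commute φ ψ :=
  Equiv.Perm.Disjoint.commute fun p => by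
    by_contra! hp
    exact hST.notMem_of_mem_left (hφ p hp.1) (hψ p hp.2)

end SupportedIn

open scoped commutatorElement

theorem Subgroup.Normal.commutatorElement_mem_of_commute_conj {G : Type*} [Group G]
    {H : Subgroup G} (hH : H.Normal) {h f g : G} (hh : h ∈ H)
    (hcomm : Commute (h * f * h⁻¹) g) : ⁅f, g⁆ ∈ H := by
  have hfh : ⁅f, h⁆ ∈ H := H.mul_mem (hH.conj_mem h hh f) (H.inv_mem hh)
  have hfg : ⁅f, g⁆ = ⁅f, h⁆ * (g * ⁅f, h⁆⁻¹ * g⁻¹) :=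
    calc ⁅f, g⁆ = f * ((h * f * h⁻¹)⁻¹ * g * (h * f * h⁻¹)) * f⁻¹ * g⁻¹ := by
          rw [hcomm.inv_left.eq, commutatorElement_def]; group
      _ = ⁅f, h⁆ * (g * ⁅f, h⁆⁻¹ * g⁻¹) := by simp only [commutatorElement_def]; group
  rw [hfg]
  exact H.mul_mem hfh (hH.conj_mem _ (H.inv_mem hfh) g)

theorem homeoDisc_commutator_mem_of_displaced_general (H : Subgroup ↥HomeoDisc) (hH : H.Normal)
    (h : ↥HomeoDisc) (hh : h ∈ H)
    (D' : Set (ℝ × ℝ))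
    (hdisj : (⇑(h : Equiv.Perm (ℝ × ℝ)) '' D') ∩ D' = ∅)
    (f g : ↥HomeoDisc)
    (hf : SupportedIn (f : Equiv.Perm (ℝ × ℝ)) (interior D'))
    (hg : SupportedIn (g : Equiv.Perm (ℝ × ℝ)) (interior D')) :
    f * g * f⁻¹ * g⁻¹ ∈ H := by
  have hcomm : Commute (h * f * h⁻¹) g := by
    rw [← Submonoid.commute_coe_coe]
    exact ((hf.mono interior_subset).conj.commute_of_disjoint (hg.mono interior_subset)
      (Set.disjoint_iff_inter_eq_empty.mpr hdisj))
  exact hH.commutatorElement_mem_of_commute_conj hh hcomm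

/-- Let `H` be a normal subgroup of `Homeo_c(𝔻, ω)`, `h ∈ H`, and let `𝔻'` be a closed
topological disc contained in the interior of `𝔻` with `h(𝔻') ∩ 𝔻' = ∅`.  Then for all
`f, g ∈ Homeo_c(𝔻, ω)` supported in the interior of `𝔻'`, the commutator
`[f, g] = f ∘ g ∘ f⁻¹ ∘ g⁻¹` belongs to `H`. -/
theorem homeoDisc_commutator_mem_of_displaced (H : Subgroup ↥HomeoDisc) (hH : H.Normal)
    (h : ↥HomeoDisc) (hh : h ∈ H)
    (D' : Set (ℝ × ℝ))
    (hD'disc : ∃ e : ↥Disc → ℝ × ℝ, Topology.IsEmbedding e ∧ Set.range e = D')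
    (hD'sub : D' ⊆ OpenDisc)
    (hdisj : (⇑(h : Equiv.Perm (ℝ × ℝ)) '' D') ∩ D' = ∅)
    (f g : ↥HomeoDisc)
    (hf : SupportedIn (f : Equiv.Perm (ℝ × ℝ)) (interior D'))
    (hg : SupportedIn (g : Equiv.Perm (ℝ × ℝ)) (interior D')) :
    f * g * f⁻¹ * g⁻¹ ∈ H :=
  homeoDisc_commutator_mem_of_displaced_general H hH h hh D' hdisj f g hf hg

end
end

section
/- Let X be a set, let f and g be bijections of X, let d be a positive integer, and let B ⊆ X be such that the sets B, f(B), f²(B), …, f^d(B) are pairwise disjoint and g(x) = x for every x ∉ B. Then for every integer k with 1 ≤ k ≤ d, a point x ∈ X satisfies (g∘f)^k(x) = x if and only if f^k(x) = x; that is, the k-periodic points of g∘f coincide with those of f for all k ≤ d. -/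
/-- Let `f` and `g` be bijections of a set `X`, let `d > 0`, and let `B ⊆ X` be such that
`B, f(B), f²(B), …, f^d(B)` are pairwise disjoint and `g` fixes every point outside `B`.
Then for every `1 ≤ k ≤ d`, the `k`-periodic points of `g ∘ f` coincide with those of `f`:
`(g ∘ f)^[k] x = x ↔ f^[k] x = x`. -/
theorem periodic_points_of_displaced_perturbation {X : Type*} (f g : Equiv.Perm X)
    (d : ℕ) (hd : 0 < d) (B : Set X)
    (hdisj : ∀ i j : ℕ, i ≤ d → j ≤ d → i ≠ j →
      Disjoint ((⇑f)^[i] '' B) ((⇑f)^[j] '' B))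
    (hg : ∀ x ∉ B, g x = x) :
    ∀ k : ℕ, 1 ≤ k → k ≤ d → ∀ x : X, (⇑(g * f))^[k] x = x ↔ (⇑f)^[k] x = x := by
  have hgf : ∀ a : X, (g * f) a = g (f a) := fun a => rfl
  -- g maps B into B
  have gB : ∀ b ∈ B, g b ∈ B := by
    intro b hb
    by_contra hnb
    have h1 : g (g b) = g b := hg (g b) hnb
    have h2 : g b = b := g.injective h1
    rw [h2] at hnb
    exact hnb hb
  -- f^[m] moves B off B for 1 ≤ m ≤ d
  have hfB : ∀ m : ℕ, 1 ≤ m → m ≤ d → ∀ y ∈ B, (⇑f)^[m] y ∉ B := by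
    intro m h1 h2 y hy hmem
    have hd0 := hdisj 0 m (Nat.zero_le d) h2 (by omega)
    have hin0 : (⇑f)^[m] y ∈ (⇑f)^[0] '' B := by simpa using hmem
    have hinm : (⇑f)^[m] y ∈ (⇑f)^[m] '' B := ⟨y, hy, rfl⟩
    exact Set.disjoint_left.mp hd0 hin0 hinm
  -- on B, iterates of g*f agree with iterates of f up to d
  have hiter : ∀ z ∈ B, ∀ m : ℕ, m ≤ d → (⇑(g * f))^[m] z = (⇑f)^[m] z := by
    intro z hz m
    induction m with
    | zero => intro _; rfl
    | succ n ih =>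
      intro hle
      have ihn := ih (by omega)
      rw [Function.iterate_succ_apply', ihn, hgf,
        show f ((⇑f)^[n] z) = (⇑f)^[n + 1] z from (Function.iterate_succ_apply' (⇑f) n z).symm]
      exact hg _ (hfB (n + 1) (by omega) hle z hz)
  intro k hk1 hk2 x
  constructor
  · -- (g*f)^[k] x = x → f^[k] x = x
    intro H
    -- no point of the (g*f)-orbit is in B
    have hz : ∀ i : ℕ, (⇑(g * f))^[i] x ∉ B := by
      intro i hi
      have hper : (⇑(g * f))^[k] ((⇑(g * f))^[i] x) = (⇑(g * f))^[i] x := by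
        rw [← Function.iterate_add_apply, Nat.add_comm, Function.iterate_add_apply, H]
      have := hiter _ hi k hk2
      rw [this] at hper
      exact hfB k hk1 hk2 _ hi (by rw [hper]; exact hi)
    have key : ∀ m : ℕ, (⇑(g * f))^[m] x = (⇑f)^[m] x := by
      intro m
      induction m with
      | zero => rfl
      | succ n ih =>
        have hfnB : f ((⇑(g * f))^[n] x) ∉ B := by
          intro hmem
          have : (⇑(g * f))^[n + 1] x ∈ B := by
            rw [Function.iterate_succ_apply', hgf]
            exact gB _ hmem
          exact hz (n + 1) this
        rw [Function.iterate_succ_apply', hgf, hg _ hfnB, ih,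
          show f ((⇑f)^[n] x) = (⇑f)^[n + 1] x from (Function.iterate_succ_apply' (⇑f) n x).symm]
    rw [← key, H]
  · -- f^[k] x = x → (g*f)^[k] x = x
    intro H
    have hz : ∀ m : ℕ, (⇑f)^[m] x ∉ B := by
      intro m hm
      have hper : (⇑f)^[k] ((⇑f)^[m] x) = (⇑f)^[m] x := by
        rw [← Function.iterate_add_apply, Nat.add_comm, Function.iterate_add_apply, H]
      exact hfB k hk1 hk2 _ hm (by rw [hper]; exact hm)
    have key : ∀ m : ℕ, (⇑(g * f))^[m] x = (⇑f)^[m] x := by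
      intro m
      induction m with
      | zero => rfl
      | succ n ih =>
        rw [Function.iterate_succ_apply', hgf, ih,
          show f ((⇑f)^[n] x) = (⇑f)^[n + 1] x from (Function.iterate_succ_apply' (⇑f) n x).symm]
        exact hg _ (hz (n + 1))
    rw [key, H]
end
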